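/- If g: Ω × [0,T] × ℝᵏ × ℝ^{k×d} → ℝᵏ satisfies: there is a nondecreasing continuous κ: ℝ≥0 → ℝ≥0 with κ(0)=0, κ(u)>0 for u>0, ∫_{0^+} u^{p-1}/κ(u)^p du = +∞ and |g(ω,t,y₁,z) − g(ω,t,y₂,z)| ≤ κ(|y₁−y₂|), and moreover κ is concave, then setting ρ(u) = κ(u^{1/p})^p + u for p > 1, ρ is nondecreasing, concave, ρ(0)=0, ρ(u)>0 for u>0, ∫_{0^+} du/ρ(u) = +∞, and |g(ω,t,y₁,z) − g(ω,t,y₂,z)|^p ≤ ρ(|y₁−y₂|^p). -/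

import Mathlib

/-!
Write `ρ u = ψ u + u` with `ψ u = κ (u ^ (1 / p)) ^ p`; only the concavity of `ψ` and the
divergence of `∫ du / ρ u` need an argument.

At `w > 0` the monotone concave `κ` lies below a tangent line `a x + b` with `a, b ≥ 0`, so `ψ`
lies below `u ↦ (a u ^ (1 / p) + b) ^ p` and touches it at `w ^ p`. That majorant is concave by
Minkowski's inequality in `ℓᵖ` of two points, and a function with a concave majorant touching it
at every point is concave.

The substitution `u = v ^ p` turns `∫ du / ρ u` into `∫ p v ^ (p - 1) / (κ v ^ p + v ^ p) dv`.
On `(0, a]` concavity and `κ 0 = 0` give `κ v ≥ (κ a / a) v`, so `v ^ p` is at most a constant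
times `κ v ^ p`, and the new integrand dominates a multiple of `v ^ (p - 1) / κ v ^ p`.
-/

open Set MeasureTheory Real

theorem ConvexOn.exists_add_mul_sub_le {S : Set ℝ} {f : ℝ → ℝ} (hf : ConvexOn ℝ S f) {w : ℝ}
    (hw : w ∈ interior S) : ∃ a, ∀ x ∈ S, f w + a * (x - w) ≤ f x := by
  refine ⟨derivWithin f (Ioi w) w, fun x hx => ?_⟩
  rcases lt_trichotomy x w with hxw | rfl | hwx
  · have h := (hf.slope_le_leftDeriv_of_mem_interior hx hw hxw).trans
      (hf.leftDeriv_le_rightDeriv_of_mem_interior hw)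
    rw [slope_def_field, div_le_iff₀ (sub_pos.2 hxw)] at h
    linarith
  · simp
  · have h := hf.rightDeriv_le_slope_of_mem_interior hw hx hwx
    rw [slope_def_field, le_div_iff₀ (sub_pos.2 hwx)] at h
    linarith

theorem ConcaveOn.exists_le_add_mul_sub {S : Set ℝ} {f : ℝ → ℝ} (hf : ConcaveOn ℝ S f) {w : ℝ}
    (hw : w ∈ interior S) : ∃ a, ∀ x ∈ S, f x ≤ f w + a * (x - w) := by
  obtain ⟨a, ha⟩ := hf.neg.exists_add_mul_sub_le hw
  refine ⟨-a, fun x hx => ?_⟩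
  have h := ha x hx
  simp only [Pi.neg_apply] at h
  linarith

theorem ConcaveOn.exists_nonneg_tangent_line {κ : ℝ → ℝ} (hconc : ConcaveOn ℝ (Ici 0) κ)
    (hmono : MonotoneOn κ (Ici 0)) (h0 : 0 ≤ κ 0) {w : ℝ} (hw : 0 < w) :
    ∃ a b : ℝ, 0 ≤ a ∧ 0 ≤ b ∧ a * w + b = κ w ∧ ∀ x ≥ 0, κ x ≤ a * x + b := by
  obtain ⟨a, ha⟩ := hconc.exists_le_add_mul_sub (by rwa [interior_Ici])
  refine ⟨a, κ w - a * w, ?_, ?_, by ring, fun x hx => by linarith [ha x hx]⟩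
  · have h1 := ha (w + 1) (by simp only [mem_Ici]; linarith)
    have h2 := hmono hw.le (by simp only [mem_Ici]; linarith) (le_add_of_nonneg_right zero_le_one)
    linarith
  · linarith [ha 0 self_mem_Ici]

theorem Real.Lp_add_le_of_nonneg_two {p : ℝ} (hp : 1 ≤ p) {x₁ x₂ y₁ y₂ : ℝ} (hx₁ : 0 ≤ x₁)
    (hx₂ : 0 ≤ x₂) (hy₁ : 0 ≤ y₁) (hy₂ : 0 ≤ y₂) :
    ((x₁ + y₁) ^ p + (x₂ + y₂) ^ p) ^ (1 / p) ≤
      (x₁ ^ p + x₂ ^ p) ^ (1 / p) + (y₁ ^ p + y₂ ^ p) ^ (1 / p) := by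
  simpa [Fin.sum_univ_two] using
    Lp_add_le_of_nonneg (s := Finset.univ) (f := ![x₁, x₂]) (g := ![y₁, y₂]) hp
      (by simp [Fin.forall_fin_two, hx₁, hx₂]) (by simp [Fin.forall_fin_two, hy₁, hy₂])

theorem concaveOn_mul_rpow_one_div_add_rpow {p : ℝ} (hp : 1 ≤ p) {a b : ℝ} (ha : 0 ≤ a)
    (hb : 0 ≤ b) : ConcaveOn ℝ (Ici 0) (fun u : ℝ => (a * u ^ (1 / p) + b) ^ p) := by
  have hp0 : 0 < p := zero_lt_one.trans_le hp
  have root : ∀ {x : ℝ}, 0 ≤ x → (x ^ (1 / p)) ^ p = x := fun hx => by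
    rw [one_div, rpow_inv_rpow hx hp0.ne']
  have root' : ∀ {x : ℝ}, 0 ≤ x → (x ^ p) ^ (1 / p) = x := fun hx => by
    rw [one_div, rpow_rpow_inv hx hp0.ne']
  refine ⟨convex_Ici 0, fun u (hu : 0 ≤ u) v (hv : 0 ≤ v) l m hl hm hlm => ?_⟩
  simp only [smul_eq_mul]
  have h := Real.Lp_add_le_of_nonneg_two hp
    (x₁ := l ^ (1 / p) * (a * u ^ (1 / p))) (x₂ := m ^ (1 / p) * (a * v ^ (1 / p)))
    (y₁ := l ^ (1 / p) * b) (y₂ := m ^ (1 / p) * b) (by positivity) (by positivity)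
    (by positivity) (by positivity)
  have scale : ∀ {c y : ℝ}, 0 ≤ c → 0 ≤ y → (c ^ (1 / p) * y) ^ p = c * y ^ p :=
    fun hc hy => by rw [mul_rpow (rpow_nonneg hc _) hy, root hc]
  have hU : (a * u ^ (1 / p)) ^ p = a ^ p * u := by
    rw [mul_rpow ha (rpow_nonneg hu _), root hu]
  have hV : (a * v ^ (1 / p)) ^ p = a ^ p * v := by
    rw [mul_rpow ha (rpow_nonneg hv _), root hv]
  rw [← mul_add, ← mul_add, scale hl (by positivity), scale hm (by positivity),
    scale hl (by positivity), scale hm (by positivity), scale hl hb, scale hm hb, hU, hV,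
    ← add_mul, hlm, one_mul, root' hb,
    show l * (a ^ p * u) + m * (a ^ p * v) = a ^ p * (l * u + m * v) by ring,
    mul_rpow (by positivity) (by positivity), root' ha] at h
  calc l * (a * u ^ (1 / p) + b) ^ p + m * (a * v ^ (1 / p) + b) ^ p
      = ((l * (a * u ^ (1 / p) + b) ^ p + m * (a * v ^ (1 / p) + b) ^ p) ^ (1 / p)) ^ p :=
        (root (by positivity)).symm
    _ ≤ (a * (l * u + m * v) ^ (1 / p) + b) ^ p := by gcongr

theorem ConcaveOn.rpow_comp_rpow_one_div {p : ℝ} (hp : 1 ≤ p) {κ : ℝ → ℝ}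
    (hnn : ∀ u ≥ 0, 0 ≤ κ u) (hmono : MonotoneOn κ (Ici 0)) (hconc : ConcaveOn ℝ (Ici 0) κ) :
    ConcaveOn ℝ (Ici 0) (fun u : ℝ => κ (u ^ (1 / p)) ^ p) := by
  refine ⟨convex_Ici 0, fun u (hu : 0 ≤ u) v (hv : 0 ≤ v) l m hl hm hlm => ?_⟩
  set ψ : ℝ → ℝ := fun u => κ (u ^ (1 / p)) ^ p
  simp only [smul_eq_mul]
  rcases (show 0 ≤ l * u + m * v by positivity).eq_or_lt with hx | hx
  · have collapse : ∀ {c y : ℝ}, c * y = 0 → c * ψ y = c * ψ (l * u + m * v) := fun h => by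
      rcases mul_eq_zero.1 h with rfl | rfl
      · simp
      · rw [← hx]
    obtain ⟨hlu, hmv⟩ := (add_eq_zero_iff_of_nonneg (mul_nonneg hl hu) (mul_nonneg hm hv)).1 hx.symm
    rw [collapse hlu, collapse hmv, ← add_mul, hlm, one_mul]
  · obtain ⟨a, b, ha, hb, hab, hline⟩ :=
      hconc.exists_nonneg_tangent_line hmono (hnn 0 le_rfl) (rpow_pos_of_pos hx (1 / p))
    have hψ : ∀ y ≥ 0, ψ y ≤ (a * y ^ (1 / p) + b) ^ p := fun y hy =>
      rpow_le_rpow (hnn _ (rpow_nonneg hy _)) (hline _ (rpow_nonneg hy _)) (by linarith)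
    calc l * ψ u + m * ψ v
        ≤ l * (a * u ^ (1 / p) + b) ^ p + m * (a * v ^ (1 / p) + b) ^ p := by
          gcongr
          · exact hψ u hu
          · exact hψ v hv
      _ ≤ (a * (l * u + m * v) ^ (1 / p) + b) ^ p :=
          (concaveOn_mul_rpow_one_div_add_rpow hp ha hb).2 hu hv hl hm hlm
      _ = ψ (l * u + m * v) := by rw [hab]

theorem integrableOn_image_rpow_iff {f : ℝ → ℝ} {p : ℝ} (hp : p ≠ 0) {s : Set ℝ}
    (hs : MeasurableSet s) (hs0 : s ⊆ Ioi 0) :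
    IntegrableOn f ((fun x => x ^ p) '' s) ↔
      IntegrableOn (fun x => x ^ (p - 1) * f (x ^ p)) s := by
  rw [integrableOn_image_iff_integrableOn_abs_deriv_smul hs
    (fun x hx => (hasDerivAt_rpow_const (Or.inl (hs0 hx).ne')).hasDerivWithinAt)
    ((rpow_left_injOn hp).mono (hs0.trans Ioi_subset_Ici_self)),
    integrableOn_congr_fun (g := fun x => |p| * (x ^ (p - 1) * f (x ^ p))) (fun x hx => by
      simp only [smul_eq_mul, abs_mul, abs_of_pos (rpow_pos_of_pos (hs0 hx) _), mul_assoc]) hs]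
  exact integrable_const_mul_iff (abs_pos.2 hp).ne'.isUnit _

theorem image_rpow_Ioc {p a : ℝ} (hp : 0 < p) (ha : 0 ≤ a) :
    (fun x => x ^ p) '' Ioc 0 a = Ioc 0 (a ^ p) := by
  ext y
  constructor
  · rintro ⟨x, ⟨hx0, hxa⟩, rfl⟩
    exact ⟨rpow_pos_of_pos hx0 p, rpow_le_rpow hx0.le hxa hp.le⟩
  · rintro ⟨hy0, hya⟩
    refine ⟨y ^ p⁻¹, ⟨rpow_pos_of_pos hy0 _, ?_⟩, rpow_inv_rpow hy0.le hp.ne'⟩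
    calc y ^ p⁻¹ ≤ (a ^ p) ^ p⁻¹ := rpow_le_rpow hy0.le hya (inv_nonneg.2 hp.le)
      _ = a := rpow_rpow_inv ha hp.ne'

theorem ConcaveOn.div_mul_le {κ : ℝ → ℝ} (hconc : ConcaveOn ℝ (Ici 0) κ) (h0 : κ 0 = 0)
    {a v : ℝ} (hv : 0 < v) (hva : v ≤ a) : κ a / a * v ≤ κ v := by
  have h := hconc.antitoneOn_slope_gt self_mem_Ici ⟨hv.le, hv⟩
    ⟨hv.le.trans hva, hv.trans_le hva⟩ hva
  simp only [slope_def_field, h0, sub_zero] at h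
  rwa [← le_div_iff₀ hv]

theorem rpow_sub_one_div_rpow_le {p c v K : ℝ} (hp : 0 < p) (hc : 0 < c) (hv : 0 < v)
    (hcv : c * v ≤ K) :
    v ^ (p - 1) / K ^ p ≤ (1 + (c ^ p)⁻¹) * (v ^ (p - 1) * (1 / (K ^ p + v ^ p))) := by
  have hK : 0 < K ^ p := rpow_pos_of_pos ((mul_pos hc hv).trans_le hcv) p
  have hvK : v ^ p ≤ (c ^ p)⁻¹ * K ^ p := by
    rw [inv_mul_eq_div, le_div_iff₀' (rpow_pos_of_pos hc p), ← mul_rpow hc.le hv.le]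
    exact rpow_le_rpow (by positivity) hcv hp.le
  calc v ^ (p - 1) / K ^ p = v ^ (p - 1) * (1 / K ^ p) := by ring
    _ ≤ v ^ (p - 1) * ((1 + (c ^ p)⁻¹) / (K ^ p + v ^ p)) := by
        refine mul_le_mul_of_nonneg_left ?_ (by positivity)
        rw [div_le_div_iff₀ hK (by positivity)]
        linarith
    _ = (1 + (c ^ p)⁻¹) * (v ^ (p - 1) * (1 / (K ^ p + v ^ p))) := by ring

theorem not_integrableOn_one_div_rpow_comp_add {p : ℝ} (hp : 0 < p) {κ : ℝ → ℝ}
    (hconc : ConcaveOn ℝ (Ici 0) κ) (h0 : κ 0 = 0) (hpos : ∀ u > (0 : ℝ), 0 < κ u)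
    {a : ℝ} (ha : 0 < a)
    (hni : ¬ IntegrableOn (fun u => u ^ (p - 1) / (κ u) ^ p) (Ioc 0 a)) :
    ¬ IntegrableOn (fun u => 1 / ((κ (u ^ (1 / p))) ^ p + u)) (Ioc 0 (a ^ p)) := by
  rw [← image_rpow_Ioc hp ha.le,
    integrableOn_image_rpow_iff hp.ne' measurableSet_Ioc Ioc_subset_Ioi_self]
  contrapose! hni
  set c := κ a / a
  have hc : 0 < c := div_pos (hpos a ha) ha
  refine (hni.const_mul (1 + (c ^ p)⁻¹)).mono' ?_ ?_
  · refine ContinuousOn.aestronglyMeasurable ?_ measurableSet_Ioc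
    have hκ : ContinuousOn κ (Ioi 0) := by
      simpa only [interior_Ici] using hconc.continuousOn_interior
    exact ((continuousOn_id.rpow_const fun x hx => Or.inl hx.1.ne').div
      ((hκ.mono Ioc_subset_Ioi_self).rpow_const fun x hx => Or.inl (hpos x hx.1).ne')
      fun x hx => (rpow_pos_of_pos (hpos x hx.1) p).ne')
  rw [ae_restrict_iff' measurableSet_Ioc]
  filter_upwards with v ⟨hv, hva⟩
  rw [show (v ^ p) ^ (1 / p) = v by rw [one_div, rpow_rpow_inv hv.le hp.ne'],
    norm_of_nonneg (div_nonneg (rpow_nonneg hv.le _) (rpow_nonneg (hpos v hv).le _))]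
  exact rpow_sub_one_div_rpow_le hp hc hv (hconc.div_mul_le h0 hv hva)

theorem stmt18_general {Ω : Type*} (k d : ℕ) (p : ℝ) (hp : 1 < p) (T : ℝ)
    (g : Ω → ℝ → EuclideanSpace ℝ (Fin k) → Matrix (Fin k) (Fin d) ℝ →
      EuclideanSpace ℝ (Fin k))
    (κ : ℝ → ℝ) (hnn : ∀ u ≥ 0, 0 ≤ κ u)
    (hmono : MonotoneOn κ (Set.Ici 0))
    (hconc : ConcaveOn ℝ (Set.Ici 0) κ)
    (h0 : κ 0 = 0) (hpos : ∀ u > (0 : ℝ), 0 < κ u)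
    (hdiv : ∃ a > (0 : ℝ),
      ¬ MeasureTheory.IntegrableOn (fun u => u ^ (p - 1) / (κ u) ^ p) (Set.Ioc 0 a))
    (hg : ∀ (ω : Ω) (t : ℝ), t ∈ Set.Icc 0 T →
      ∀ (y₁ y₂ : EuclideanSpace ℝ (Fin k)) (z : Matrix (Fin k) (Fin d) ℝ),
        ‖g ω t y₁ z - g ω t y₂ z‖ ≤ κ ‖y₁ - y₂‖) :
    MonotoneOn (fun u : ℝ => (κ (u ^ (1 / p))) ^ p + u) (Set.Ici 0) ∧
    ConcaveOn ℝ (Set.Ici 0) (fun u : ℝ => (κ (u ^ (1 / p))) ^ p + u) ∧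
    (κ ((0 : ℝ) ^ (1 / p))) ^ p + (0 : ℝ) = 0 ∧
    (∀ u > (0 : ℝ), 0 < (κ (u ^ (1 / p))) ^ p + u) ∧
    (∃ b > (0 : ℝ),
      ¬ MeasureTheory.IntegrableOn
        (fun u => 1 / ((κ (u ^ (1 / p))) ^ p + u)) (Set.Ioc 0 b)) ∧
    (∀ (ω : Ω) (t : ℝ), t ∈ Set.Icc 0 T →
      ∀ (y₁ y₂ : EuclideanSpace ℝ (Fin k)) (z : Matrix (Fin k) (Fin d) ℝ),
        ‖g ω t y₁ z - g ω t y₂ z‖ ^ p ≤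
          (κ ((‖y₁ - y₂‖ ^ p) ^ (1 / p))) ^ p + ‖y₁ - y₂‖ ^ p) := by
  have hp0 : 0 < p := one_pos.trans hp
  refine ⟨fun u (hu : 0 ≤ u) v (hv : 0 ≤ v) huv => ?_,
    (hconc.rpow_comp_rpow_one_div hp.le hnn hmono).add (concaveOn_id (convex_Ici 0)),
    by rw [zero_rpow (one_div_ne_zero hp0.ne'), h0, zero_rpow hp0.ne', add_zero],
    fun u hu => add_pos_of_nonneg_of_pos (rpow_nonneg (hnn _ (rpow_nonneg hu.le _)) p) hu, ?_,
    fun ω t ht y₁ y₂ z => ?_⟩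
  · have hκ : κ (u ^ (1 / p)) ≤ κ (v ^ (1 / p)) :=
      hmono (rpow_nonneg hu _) (rpow_nonneg hv _) (rpow_le_rpow hu huv (by positivity))
    exact add_le_add (rpow_le_rpow (hnn _ (rpow_nonneg hu _)) hκ hp0.le) huv
  · obtain ⟨a, ha, hni⟩ := hdiv
    exact ⟨a ^ p, rpow_pos_of_pos ha p,
      not_integrableOn_one_div_rpow_comp_add hp0 hconc h0 hpos ha hni⟩
  · rw [one_div, rpow_rpow_inv (norm_nonneg _) hp0.ne']
    have hgp := rpow_le_rpow (norm_nonneg _) (hg ω t ht y₁ y₂ z) hp0.le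
    linarith [rpow_nonneg (norm_nonneg (y₁ - y₂)) p]

theorem stmt18 {Ω : Type*} (k d : ℕ) (p : ℝ) (hp : 1 < p) (T : ℝ)
    (g : Ω → ℝ → EuclideanSpace ℝ (Fin k) → Matrix (Fin k) (Fin d) ℝ →
      EuclideanSpace ℝ (Fin k))
    (κ : ℝ → ℝ) (hnn : ∀ u ≥ 0, 0 ≤ κ u)
    (hmono : MonotoneOn κ (Set.Ici 0)) (hcont : ContinuousOn κ (Set.Ici 0))
    (hconc : ConcaveOn ℝ (Set.Ici 0) κ)
    (h0 : κ 0 = 0) (hpos : ∀ u > (0 : ℝ), 0 < κ u)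
    (hdiv : ∃ a > (0 : ℝ),
      ¬ MeasureTheory.IntegrableOn (fun u => u ^ (p - 1) / (κ u) ^ p) (Set.Ioc 0 a))
    (hg : ∀ (ω : Ω) (t : ℝ), t ∈ Set.Icc 0 T →
      ∀ (y₁ y₂ : EuclideanSpace ℝ (Fin k)) (z : Matrix (Fin k) (Fin d) ℝ),
        ‖g ω t y₁ z - g ω t y₂ z‖ ≤ κ ‖y₁ - y₂‖) :
    MonotoneOn (fun u : ℝ => (κ (u ^ (1 / p))) ^ p + u) (Set.Ici 0) ∧
    ConcaveOn ℝ (Set.Ici 0) (fun u : ℝ => (κ (u ^ (1 / p))) ^ p + u) ∧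
    (κ ((0 : ℝ) ^ (1 / p))) ^ p + (0 : ℝ) = 0 ∧
    (∀ u > (0 : ℝ), 0 < (κ (u ^ (1 / p))) ^ p + u) ∧
    (∃ b > (0 : ℝ),
      ¬ MeasureTheory.IntegrableOn
        (fun u => 1 / ((κ (u ^ (1 / p))) ^ p + u)) (Set.Ioc 0 b)) ∧
    (∀ (ω : Ω) (t : ℝ), t ∈ Set.Icc 0 T →
      ∀ (y₁ y₂ : EuclideanSpace ℝ (Fin k)) (z : Matrix (Fin k) (Fin d) ℝ),
        ‖g ω t y₁ z - g ω t y₂ z‖ ^ p ≤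
          (κ ((‖y₁ - y₂‖ ^ p) ^ (1 / p))) ^ p + ‖y₁ - y₂‖ ^ p) :=
  stmt18_general k d p hp T g κ hnn hmono hconc h0 hpos hdiv hg
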